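/- Let q = 0, r < 0, s > 0 (output-strictly passive plant case). If r/(2s) < k₁ < k₂, then there exists λ > 0 such that the matrix [[0, s],[s, r]] − λ·[[1, (k₁+k₂)/2],[(k₁+k₂)/2, k₁k₂]] is negative definite. -/

import Mathlib

open Matrix

def NegDef (M : Matrix (Fin 2) (Fin 2) ℝ) : Prop :=
  ∀ v : Fin 2 → ℝ, v ≠ 0 → v ⬝ᵥ M.mulVec v < 0

noncomputable def sectorMat (k1 k2 : ℝ) : Matrix (Fin 2) (Fin 2) ℝ :=
  !![1, (k1 + k2) / 2; (k1 + k2) / 2, k1 * k2]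

/-! The determinant of `!![0, s; s, r] - λ • sectorMat k1 k2` is the concave quadratic
`λ (s (k₁ + k₂) - r) - s² - λ² (k₂ - k₁)² / 4` in `λ`. At its maximiser it equals
`(s (k₁ + k₂) - r)² / (k₂ - k₁)² - s²`, which is positive exactly when `r < 2 s k₁`; since the
`(0,0)` entry `-λ` is negative, the matrix is then negative definite by Sylvester's criterion. -/

theorem dotProduct_mulVec_fin_two {R : Type*} [CommRing R] (a b c d : R) (v : Fin 2 → R) :
    v ⬝ᵥ !![a, b; c, d] *ᵥ v = a * v 0 ^ 2 + (b + c) * v 0 * v 1 + d * v 1 ^ 2 := by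
  simp only [dotProduct, mulVec, Fin.sum_univ_two, cons_val', cons_val_zero, cons_val_one,
    empty_val', cons_val_fin_one, of_apply]
  ring

theorem negDef_of_fin_two {a b d : ℝ} (ha : a < 0) (hdet : b ^ 2 < a * d) :
    NegDef !![a, b; b, d] := by
  intro v hv
  rw [dotProduct_mulVec_fin_two]
  -- completing the square: `a * (quadratic form) = (a x + b y)² + (a d - b²) y²`
  suffices 0 < (a * v 0 + b * v 1) ^ 2 + (a * d - b ^ 2) * v 1 ^ 2 by nlinarith
  rcases eq_or_ne (v 1) 0 with hv1 | hv1
  · have hv0 : v 0 ≠ 0 := fun hv0 => hv (funext <| Fin.forall_fin_two.2 ⟨hv0, hv1⟩)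
    simpa [hv1] using sq_pos_of_ne_zero (mul_ne_zero ha.ne hv0)
  · exact add_pos_of_nonneg_of_pos (sq_nonneg _) (mul_pos (by linarith) (by positivity))

theorem sub_smul_sectorMat (s r k1 k2 lam : ℝ) :
    !![0, s; s, r] - lam • sectorMat k1 k2 =
      !![-lam, s - lam * ((k1 + k2) / 2); s - lam * ((k1 + k2) / 2), r - lam * (k1 * k2)] := by
  ext i j
  fin_cases i <;> fin_cases j <;> simp [sectorMat]

noncomputable def sectorMultiplier (s r k1 k2 : ℝ) : ℝ :=
  2 * (s * (k1 + k2) - r) / (k2 - k1) ^ 2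

section

variable {s r k1 k2 : ℝ}

theorem sectorMultiplier_pos (hs : 0 < s) (hr : r < 2 * s * k1) (h12 : k1 < k2) :
    0 < sectorMultiplier s r k1 k2 := by
  have : 0 < s * (k1 + k2) - r := by nlinarith
  unfold sectorMultiplier
  positivity

theorem sq_lt_mul_at_sectorMultiplier (hs : 0 < s) (hr : r < 2 * s * k1) (h12 : k1 < k2) :
    (s - sectorMultiplier s r k1 k2 * ((k1 + k2) / 2)) ^ 2 <
      -sectorMultiplier s r k1 k2 * (r - sectorMultiplier s r k1 k2 * (k1 * k2)) := by
  have hδ : 0 < k2 - k1 := sub_pos.2 h12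
  have hgap : s * (k2 - k1) < s * (k1 + k2) - r := by linarith
  have hdet : -sectorMultiplier s r k1 k2 * (r - sectorMultiplier s r k1 k2 * (k1 * k2)) -
      (s - sectorMultiplier s r k1 k2 * ((k1 + k2) / 2)) ^ 2 =
        ((s * (k1 + k2) - r) ^ 2 - (s * (k2 - k1)) ^ 2) / (k2 - k1) ^ 2 := by
    unfold sectorMultiplier
    field_simp
    ring
  have : 0 < ((s * (k1 + k2) - r) ^ 2 - (s * (k2 - k1)) ^ 2) / (k2 - k1) ^ 2 := by
    apply div_pos _ (by positivity)
    nlinarith [mul_pos hs hδ]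
  linarith

end

theorem stmt_3_general (s r k1 k2 : ℝ) (hs : 0 < s)
    (h1 : r / (2 * s) < k1) (h12 : k1 < k2) :
    ∃ lam : ℝ, 0 < lam ∧ NegDef (!![0, s; s, r] - lam • sectorMat k1 k2) := by
  have hr : r < 2 * s * k1 := by
    rw [div_lt_iff₀ (by positivity)] at h1
    linarith
  refine ⟨sectorMultiplier s r k1 k2, sectorMultiplier_pos hs hr h12, ?_⟩
  rw [sub_smul_sectorMat]
  exact negDef_of_fin_two (neg_neg_of_pos (sectorMultiplier_pos hs hr h12))
    (sq_lt_mul_at_sectorMultiplier hs hr h12)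

theorem stmt_3 (s r k1 k2 : ℝ) (hs : 0 < s) (hr : r < 0)
    (h1 : r / (2 * s) < k1) (h12 : k1 < k2) :
    ∃ lam : ℝ, 0 < lam ∧ NegDef (!![0, s; s, r] - lam • sectorMat k1 k2) :=
  stmt_3_general s r k1 k2 hs h1 h12
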